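/- Let X be a compact metric space, T : X → X continuous, λ a Borel probability measure on X, and A ⊆ X a metric attractor of T with respect to λ. Then for every closed set K ⊆ X one has: K ∩ A ≠ ∅ if and only if λ({x ∈ X : ω(x) ∩ K ≠ ∅}) > 0. -/

import Mathlib

open Filter Topology MeasureTheory Set
open scoped ENNReal NNReal

/-- Cylinder of a finite word in Cantor space: the set of sequences beginning with `w`. -/
def cyl {𝒜 : Type*} (w : List 𝒜) : Set (ℕ → 𝒜) :=
  {x | ∀ i : Fin w.length, x i = w.get i}

/-- The shift map on Cantor space. -/
def shiftMap {𝒜 : Type*} (x : ℕ → 𝒜) : ℕ → 𝒜 := fun i => x (i + 1)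

/-- ω-limit set of `x` under iteration of `T`: the set of accumulation points of the orbit. -/
def omegaSet {X : Type*} [TopologicalSpace X] (T : X → X) (x : X) : Set X :=
  {y | MapClusterPt y Filter.atTop fun n => T^[n] x}

/-- Realm of attraction `ρ(A) = {x : ω(x) ⊆ A}`. -/
def realm {X : Type*} [TopologicalSpace X] (T : X → X) (A : Set X) : Set X :=
  {x | omegaSet T x ⊆ A}

/-- `A` is a topological attractor of `T`: a closed invariant set whose realm of attraction is
residual, and such that no strictly smaller closed subset has nonmeager realm of attraction. -/
def IsTopAttractor {X : Type*} [TopologicalSpace X] (T : X → X) (A : Set X) : Prop :=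
  IsClosed A ∧ Set.MapsTo T A A ∧ realm T A ∈ residual X ∧
    ∀ A' : Set X, IsClosed A' → A' ⊂ A → IsMeagre (realm T A')

/-- `A` is a metric attractor of `T` w.r.t. `lam`: a closed invariant set whose realm of
attraction has full measure, and no strictly smaller closed subset has realm of positive
measure. -/
def IsMetricAttractor {X : Type*} [TopologicalSpace X] [MeasurableSpace X]
    (T : X → X) (lam : Measure X) (A : Set X) : Prop :=
  IsClosed A ∧ Set.MapsTo T A A ∧ lam (realm T A) = 1 ∧
    ∀ A' : Set X, IsClosed A' → A' ⊂ A → lam (realm T A') = 0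

/-- Empirical (Birkhoff) measures `ν_n(x) = (1/n) ∑_{i<n} δ_{T^i x}`. -/
noncomputable def empMeasure {X : Type*} [MeasurableSpace X] (T : X → X) (x : X) (n : ℕ) :
    Measure X :=
  (n : ℝ≥0∞)⁻¹ • ∑ i ∈ Finset.range n, Measure.dirac (T^[i] x)

/-- Weak-* convergence of a sequence of measures: integrals of continuous functions converge. -/
def WeakTendsto {X : Type*} [TopologicalSpace X] [MeasurableSpace X]
    (μs : ℕ → Measure X) (μ : Measure X) : Prop :=
  ∀ φ : C(X, ℝ), Filter.Tendsto (fun n => ∫ x, φ x ∂(μs n)) Filter.atTop (nhds (∫ x, φ x ∂μ))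

/-- Topological support of a measure: points all of whose open neighbourhoods have positive
measure. -/
def measSupport {X : Type*} [TopologicalSpace X] [MeasurableSpace X]
    (μ : Measure X) : Set X :=
  {x | ∀ U : Set X, IsOpen U → x ∈ U → 0 < μ U}

/-- `A` is a statistical (physical) attractor of `T` w.r.t. `lam`: there is a `T`-invariant
probability measure `μ` with support `A` such that for `lam`-a.e. `x` the empirical measures
converge weak-* to `μ`. -/
def IsStatAttractor {X : Type*} [TopologicalSpace X] [MeasurableSpace X]
    (T : X → X) (lam : Measure X) (A : Set X) : Prop :=
  IsClosed A ∧ ∃ μ : Measure X, IsProbabilityMeasure μ ∧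
    Measure.map T μ = μ ∧ measSupport μ = A ∧
    ∀ᵐ x ∂lam, WeakTendsto (empMeasure T x) μ

/-- `A` is strongly attracting: there is an open `U ⊇ A` with `T (closure U) ⊆ U` and
`A = ⋂ₙ Tⁿ(U)`. -/
def StronglyAttracting {X : Type*} [TopologicalSpace X] (T : X → X) (A : Set X) : Prop :=
  ∃ U : Set X, IsOpen U ∧ A ⊆ U ∧ T '' (closure U) ⊆ U ∧ A = ⋂ n : ℕ, T^[n] '' U

/-- `S` is Σ₁ (recursively enumerable). -/
def SigmaOne {I : Type*} [Primcodable I] (S : Set I) : Prop :=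
  ∃ f : I × ℕ → Bool, Computable f ∧ ∀ i, i ∈ S ↔ ∃ a, f (i, a) = true

/-- `S` is Π₁ (co-r.e.). -/
def PiOne {I : Type*} [Primcodable I] (S : Set I) : Prop := SigmaOne Sᶜ

/-- `S` is Σ₂. -/
def SigmaTwo {I : Type*} [Primcodable I] (S : Set I) : Prop :=
  ∃ f : I × ℕ × ℕ → Bool, Computable f ∧ ∀ i, i ∈ S ↔ ∃ a, ∀ b, f (i, a, b) = true

/-- `S` is Π₂. -/
def PiTwo {I : Type*} [Primcodable I] (S : Set I) : Prop :=
  ∃ f : I × ℕ × ℕ → Bool, Computable f ∧ ∀ i, i ∈ S ↔ ∀ a, ∃ b, f (i, a, b) = true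

/-- A map of Cantor space is computable if `(T x) n` is computed by a computable function from
`n` and the finite prefix `[x 0, …, x (α n)]` of `x`, for a computable modulus `α`. -/
def CantorComputable {𝒜 : Type} [Primcodable 𝒜] (T : (ℕ → 𝒜) → (ℕ → 𝒜)) : Prop :=
  ∃ (α : ℕ → ℕ) (β : ℕ → List 𝒜 → 𝒜), Computable α ∧ Computable₂ β ∧
    ∀ (x : ℕ → 𝒜) (n : ℕ), T x n = β n (List.ofFn fun i : Fin (α n + 1) => x i)

/-- A Borel probability measure on Cantor space is computable if the measures of finite unions
of cylinders are uniformly lower-computable: `lam(⋃_{w ∈ W} [w]) = sup_k q (W, k)` for a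
computable `q`. -/
def ComputableCantorMeasure {𝒜 : Type} [Primcodable 𝒜] [MeasurableSpace 𝒜]
    (lam : Measure (ℕ → 𝒜)) : Prop :=
  ∃ q : List (List 𝒜) × ℕ → ℚ, Computable q ∧
    ∀ W : List (List 𝒜), (lam (⋃ w ∈ W, cyl w)).toReal = ⨆ k, (q (W, k) : ℝ)

/-- Indices of machines halting on input 0. -/
def HaltSet : Set ℕ := {e | ((Denumerable.ofNat Nat.Partrec.Code e).eval 0).Dom}

/-- Indices of total machines. -/
def TotSet : Set ℕ := {e | ∀ n, ((Denumerable.ofNat Nat.Partrec.Code e).eval n).Dom}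

/-- Indices of machines with finite domain. -/
def FinSet : Set ℕ := {e | {n | ((Denumerable.ofNat Nat.Partrec.Code e).eval n).Dom}.Finite}


/-!
If `a ∈ K ∩ A`, every set `A \ U`, with `U` a thickening of `K`, is a proper closed subset of
`A`, so its realm of attraction is null. A point of `ρ(A)` whose (compact) ω-limit set misses `K`
stays a positive distance away from `K`, hence lies in the realm of one of countably many such
sets; so `ρ(A)` is covered by `{x : ω(x) ∩ K ≠ ∅}` up to a null set. Conversely, if `K ∩ A = ∅`,
that set is disjoint from `ρ(A)`, which has full measure; it is measurable because its
complement is `⋃ₙ {x : Tᵐ x ∉ Uₙ for all large m}`.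
-/

open Metric

section OmegaSet

variable {X : Type*} [TopologicalSpace X] {T : X → X} {x : X}

theorem isClosed_omegaSet (T : X → X) (x : X) : IsClosed (omegaSet T x) :=
  isClosed_setOfPred_clusterPt

theorem omegaSet_subset_of_eventually_mem {F : Set X} (hF : IsClosed F)
    (h : ∀ᶠ n in atTop, T^[n] x ∈ F) : omegaSet T x ⊆ F :=
  fun _ hy => hF.mem_of_mapClusterPt hy h

theorem eventually_mem_of_omegaSet_subset [CompactSpace X] {U : Set X} (hU : IsOpen U)
    (h : omegaSet T x ⊆ U) : ∀ᶠ n in atTop, T^[n] x ∈ U := by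
  by_contra hfreq
  rw [not_eventually] at hfreq
  obtain ⟨y, hyU, hy⟩ := hU.isClosed_compl.isCompact.exists_mapClusterPt_of_frequently hfreq
  exact hyU (h hy)

end OmegaSet

section Metric

variable {X : Type*} [MetricSpace X] [CompactSpace X] {T : X → X} {x : X} {K : Set X}

theorem exists_disjoint_omegaSet_cthickening (hK : IsClosed K) (h : Disjoint (omegaSet T x) K) :
    ∃ n : ℕ, Disjoint (omegaSet T x) (cthickening (1 / (n + 1 : ℝ)) K) := by
  obtain ⟨δ, hδ, hdisj⟩ := h.exists_cthickenings (isClosed_omegaSet T x).isCompact hK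
  obtain ⟨n, hn⟩ := exists_nat_one_div_lt hδ
  exact ⟨n, hdisj.mono (self_subset_cthickening _) (cthickening_mono hn.le K)⟩

theorem disjoint_omegaSet_iff_eventually_notMem_thickening (hK : IsClosed K) :
    Disjoint (omegaSet T x) K ↔
      ∃ n : ℕ, ∀ᶠ m in atTop, T^[m] x ∉ thickening (1 / (n + 1 : ℝ)) K := by
  constructor
  · intro h
    obtain ⟨n, hn⟩ := exists_disjoint_omegaSet_cthickening hK h
    refine ⟨n, (eventually_mem_of_omegaSet_subset isClosed_cthickening.isOpen_compl
      hn.subset_compl_right).mono fun m hm => ?_⟩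
    exact fun hmK => hm (thickening_subset_cthickening _ _ hmK)
  · rintro ⟨n, hn⟩
    have hω := omegaSet_subset_of_eventually_mem isOpen_thickening.isClosed_compl hn
    exact disjoint_left.2 fun y hy hyK => hω hy (self_subset_thickening (by positivity) K hyK)

theorem measurableSet_setOf_omegaSet_inter_nonempty [MeasurableSpace X] [BorelSpace X]
    (hT : Continuous T) (hK : IsClosed K) :
    MeasurableSet {x | (omegaSet T x ∩ K).Nonempty} := by
  have hcompl : {x | (omegaSet T x ∩ K).Nonempty}ᶜ =
      ⋃ n : ℕ, liminf (fun m => T^[m] ⁻¹' (thickening (1 / (n + 1 : ℝ)) K)ᶜ) atTop := by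
    ext x
    simp only [mem_compl_iff, mem_ofPred_eq, not_nonempty_iff_eq_empty,
      ← disjoint_iff_inter_eq_empty, disjoint_omegaSet_iff_eventually_notMem_thickening hK,
      mem_iUnion, mem_liminf_iff_eventually_mem, mem_preimage]
  refine MeasurableSet.of_compl ?_
  rw [hcompl]
  exact .iUnion fun n => MeasurableSet.measurableSet_liminf fun m =>
    (isOpen_thickening.isClosed_compl.preimage (hT.iterate m)).measurableSet

theorem realm_subset_union_iUnion_realm_diff_thickening (hK : IsClosed K) (A : Set X) :
    realm T A ⊆ {x | (omegaSet T x ∩ K).Nonempty} ∪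
      ⋃ n : ℕ, realm T (A \ thickening (1 / (n + 1 : ℝ)) K) := by
  intro x hx
  by_cases h : (omegaSet T x ∩ K).Nonempty
  · exact Or.inl h
  · rw [not_nonempty_iff_eq_empty, ← disjoint_iff_inter_eq_empty] at h
    obtain ⟨n, hn⟩ := exists_disjoint_omegaSet_cthickening hK h
    exact Or.inr <| mem_iUnion.2
      ⟨n, subset_sdiff.2 ⟨hx, hn.mono_right (thickening_subset_cthickening _ _)⟩⟩

end Metric

namespace IsMetricAttractor

variable {X : Type*} [MeasurableSpace X] {T : X → X} {lam : Measure X} {A K : Set X}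

theorem measure_realm_diff_thickening_eq_zero [PseudoMetricSpace X]
    (hA : IsMetricAttractor T lam A) (hKA : (K ∩ A).Nonempty) {r : ℝ} (hr : 0 < r) :
    lam (realm T (A \ thickening r K)) = 0 := by
  obtain ⟨hAc, -, -, hAmin⟩ := hA
  obtain ⟨a, haK, haA⟩ := hKA
  exact hAmin _ (hAc.sdiff isOpen_thickening)
    ⟨sdiff_subset, fun h => (h haA).2 (self_subset_thickening hr K haK)⟩

variable [MetricSpace X] [CompactSpace X]

theorem measure_setOf_omegaSet_inter_nonempty_pos (hA : IsMetricAttractor T lam A)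
    (hK : IsClosed K) (hKA : (K ∩ A).Nonempty) :
    0 < lam {x | (omegaSet T x ∩ K).Nonempty} := by
  have hnull : lam (⋃ n : ℕ, realm T (A \ thickening (1 / (n + 1 : ℝ)) K)) = 0 :=
    measure_iUnion_null fun n => hA.measure_realm_diff_thickening_eq_zero hKA (by positivity)
  calc 0 < lam (realm T A) := by rw [hA.2.2.1]; exact one_pos
    _ ≤ lam {x | (omegaSet T x ∩ K).Nonempty} +
          lam (⋃ n : ℕ, realm T (A \ thickening (1 / (n + 1 : ℝ)) K)) :=
      (measure_mono (realm_subset_union_iUnion_realm_diff_thickening hK A)).trans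
        (measure_union_le _ _)
    _ = lam {x | (omegaSet T x ∩ K).Nonempty} := by rw [hnull, add_zero]

theorem measure_setOf_omegaSet_inter_nonempty_eq_zero [BorelSpace X] [IsProbabilityMeasure lam]
    (hT : Continuous T) (hA : IsMetricAttractor T lam A) (hK : IsClosed K) (hKA : K ∩ A = ∅) :
    lam {x | (omegaSet T x ∩ K).Nonempty} = 0 := by
  have hS := measurableSet_setOf_omegaSet_inter_nonempty hT hK
  have hrealm : realm T A ⊆ {x | (omegaSet T x ∩ K).Nonempty}ᶜ :=
    fun x hx ⟨y, hyω, hyK⟩ => hKA.subset ⟨hyK, hx hyω⟩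
  rw [← compl_compl {x | (omegaSet T x ∩ K).Nonempty}, prob_compl_eq_zero_iff hS.compl]
  exact le_antisymm prob_le_one (hA.2.2.1 ▸ measure_mono hrealm)

end IsMetricAttractor

/-- If `A` is a metric attractor of a continuous map of a compact metric space w.r.t. a Borel
probability measure `lam`, then a closed set `K` meets `A` iff `{x : ω(x) ∩ K ≠ ∅}` has
positive measure. -/
theorem stmt3 {X : Type*} [MetricSpace X] [CompactSpace X]
    [MeasurableSpace X] [BorelSpace X]
    {T : X → X} (hT : Continuous T) (lam : Measure X) [IsProbabilityMeasure lam]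
    {A : Set X} (hA : IsMetricAttractor T lam A)
    {K : Set X} (hK : IsClosed K) :
    (K ∩ A).Nonempty ↔ 0 < lam {x : X | (omegaSet T x ∩ K).Nonempty} := by
  refine ⟨hA.measure_setOf_omegaSet_inter_nonempty_pos hK, fun hpos => ?_⟩
  by_contra hKA
  exact hpos.ne' (hA.measure_setOf_omegaSet_inter_nonempty_eq_zero hT hK
    (not_nonempty_iff_eq_empty.1 hKA))
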